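/- Let S and T be fold strings whose curves end in z_S = f(θ_S(a)) and z_T = f(θ_T(a)) respectively. Then the curve of the folding convolution S*T ends in the product: f(θ_{S*T}(a)) = z_S · z_T. -/

import Mathlib

open scoped Classical

/-- Letters of the folding alphabet {D, U}. -/
inductive FoldLetter : Type
  | D : FoldLetter
  | U : FoldLetter
deriving DecidableEq

/-- Words over {D, U}. -/
abbrev FWord := List FoldLetter

/-- The letter morphism μ swapping D and U. -/
def mir : FoldLetter → FoldLetter
  | .D => .U
  | .U => .D

/-- S̄ = μ(τ(S)): reverse the word and swap D and U. -/
def fbar (S : FWord) : FWord := (S.reverse).map mir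

/-- The folding convolution S * T. -/
def conv (S : FWord) : FWord → FWord
  | [] => S
  | b :: T => S ++ b :: conv (fbar S) T

/-- A fold string: a nonempty word over {D,U} starting with D. -/
def IsFoldString (S : FWord) : Prop := S ≠ [] ∧ S.head? = some FoldLetter.D

/-- The alphabet A = {a,b,c,d}, encoded as ZMod 4 (a = 0, b = 1, c = 2, d = 3),
so that σ is addition of 1 and f is k ↦ i^k. -/
abbrev Alpha := ZMod 4

/-- Words over A. -/
abbrev AWord := List Alpha

/-- w(D) = 1, w(U) = -1. -/
def wInt : FoldLetter → ℤ
  | .D => 1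
  | .U => -1

/-- The homomorphism w on words. -/
def wSum (S : FWord) : ℤ := (S.map wInt).sum

/-- θ_S(a) = e₀ e₁ ⋯ e_{m-1} with e₀ = a and e_i = σ^{w(a₁⋯a_i)}(a). -/
def thetaA (S : FWord) : AWord :=
  (List.range (S.length + 1)).map (fun i => ((wSum (S.take i) : ℤ) : Alpha))

/-- The word operation στ (reverse, then cyclically shift each letter). -/
def st (v : AWord) : AWord := v.reverse.map (· + 1)

/-- θ_S on a letter: θ_S(σ^k(a)) = (στ)^k (θ_S(a)). -/
def thetaL (S : FWord) (e : Alpha) : AWord := st^[e.val] (thetaA S)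

/-- The folding morphism θ_S as a monoid endomorphism of A*. -/
def theta (S : FWord) (v : AWord) : AWord := v.flatMap (thetaL S)

/-- f on letters: f(a) = 1, f(b) = i, f(c) = -1, f(d) = -i. -/
noncomputable def fL : Alpha → ℂ := fun e => Complex.I ^ e.val

/-- The homomorphism f : A* → (ℂ, +). -/
noncomputable def fW (v : AWord) : ℂ := (v.map fL).sum

/-- The k-th point z_k of the curve of a word v. -/
noncomputable def pt (v : AWord) (k : ℕ) : ℂ := fW (v.take k)

/-- The curve of v traverses a segment twice. -/
def TraversesTwice (v : AWord) : Prop :=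
  ∃ k l, k < v.length ∧ l < v.length ∧ k ≠ l ∧
    ({pt v k, pt v (k + 1)} : Set ℂ) = ({pt v l, pt v (l + 1)} : Set ℂ)

/-- The fold string S is self-avoiding. -/
def SelfAvoiding (S : FWord) : Prop :=
  ∀ n : ℕ, 1 ≤ n → ¬ TraversesTwice ((theta S)^[n] [0])

/-- z ∈ ℂ is a Gaussian integer. -/
def IsGaussianInt (z : ℂ) : Prop := ∃ p q : ℤ, z = (p : ℂ) + (q : ℂ) * Complex.I

/-- The number of indices k ∈ {0, …, |v|} with z_k = z (occurrences of z among
the points of the curve of v). -/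
noncomputable def countAt (v : AWord) (z : ℂ) : ℕ :=
  ((Finset.range (v.length + 1)).filter (fun k => pt v k = z)).card

/-- The fold string S is planefilling. -/
def Planefilling (S : FWord) : Prop :=
  ∀ R : ℝ, 0 < R → ∃ n : ℕ, 1 ≤ n ∧ ∃ q : ℂ, IsGaussianInt q ∧
    ∀ z : ℂ, IsGaussianInt z → ‖z - q‖ ≤ R →
      2 ≤ countAt ((theta S)^[n] [0]) z

/-- The word θ_S(abcd), whose curve is the θ-loop of S. -/
def loopWord (S : FWord) : AWord := theta S [0, 1, 2, 3]

/-- The rounding of the closed curve of a word v (all of whose steps are unit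
segments and with f(v) = 0), as a subset of ℂ. -/
noncomputable def roundedCurve (v : AWord) : Set ℂ :=
  ⋃ k ∈ Finset.range v.length,
    (segment ℝ (pt v k + (pt v (k + 1) - pt v k) / 4)
        (pt v (k + 1) - (pt v (k + 1) - pt v k) / 4) ∪
      segment ℝ (pt v (k + 1) - (pt v (k + 1) - pt v k) / 4)
        (pt v ((k + 1) % v.length) +
          (pt v ((k + 1) % v.length + 1) - pt v ((k + 1) % v.length)) / 4))

/-- The number of indices k ∈ {0, …, |v| - 1} with z_k = z (occurrences of z among
the vertices of the closed curve of v). -/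
noncomputable def vertexCount (v : AWord) (z : ℂ) : ℕ :=
  ((Finset.range v.length).filter (fun k => pt v k = z)).card

/-- The closed curve of v is maximally simple: it is simple, and every Gaussian
integer lying in a bounded connected component of the complement of its rounding
occurs exactly twice among its vertices. -/
def MaximallySimple (v : AWord) : Prop :=
  ¬ TraversesTwice v ∧
    ∀ z : ℂ, IsGaussianInt z → z ∉ roundedCurve v →
      Bornology.IsBounded (connectedComponentIn (roundedCurve v)ᶜ z) →
      vertexCount v z = 2

/-- A D-word: letters from {a,c} (even) and {b,d} (odd) alternate. -/
def IsDWord (v : AWord) : Prop :=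
  ∀ k (h : k + 1 < v.length),
    (v[k]'(Nat.lt_of_succ_lt h)).val % 2 ≠ (v[k + 1]'h).val % 2

/-- A loop word: a nonempty D-word with f(v) = 0. -/
def IsLoopWord (v : AWord) : Prop := v ≠ [] ∧ IsDWord v ∧ fW v = 0

/-- The eight square words σᵏ(abcd), σᵏ(adcb), k = 0,1,2,3. -/
def squareWords : List AWord :=
  [[0, 1, 2, 3], [1, 2, 3, 0], [2, 3, 0, 1], [3, 0, 1, 2],
   [0, 3, 2, 1], [1, 0, 3, 2], [2, 1, 0, 3], [3, 2, 1, 0]]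

/-- K[v] ⊆ ℂ: the union of the segments of the curve of v. -/
noncomputable def KSet (v : AWord) : Set ℂ :=
  ⋃ k ∈ Finset.range v.length, segment ℝ (pt v k) (pt v (k + 1))

/-- The number of boundary points of S: Gaussian integers visited exactly once
by the curve of θ_S(a). -/
noncomputable def rCount (S : FWord) : ℕ :=
  ((Finset.range ((thetaA S).length + 1)).filter
    (fun k => countAt (thetaA S) (pt (thetaA S) k) = 1)).card

/-- The k-th point Z_k of the infinite curve of S. -/
noncomputable def Zpt (S : FWord) (k : ℕ) : ℂ := pt ((theta S)^[k] [0]) k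

/-- The fold string S is perfect. -/
def IsPerfectFold (S : FWord) : Prop :=
  SelfAvoiding S ∧
    ∀ p q : ℂ, IsGaussianInt p → IsGaussianInt q → ‖p - q‖ = 1 →
      ∃! jk : Fin 4 × ℕ,
        ({Complex.I ^ (jk.1 : ℕ) * Zpt S jk.2,
          Complex.I ^ (jk.1 : ℕ) * Zpt S (jk.2 + 1)} : Set ℂ) = ({p, q} : Set ℂ)

/-! The endpoint z_S = f(θ_S(a)) is the sum of the unit steps i^{w(a₁⋯a_k)}, k = 0, …, |S|.
Splitting S ++ b :: X after S turns the steps of b :: X into those of X rotated by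
i^{w(S) + w(b)}, and S̄ walks the steps of S backwards, rotated by i^{-w(S)}. Hence
z_{S*(b::T)} = z_S + i^{w(b)} z_S z_T, which is the recursion z_{b::T} = 1 + i^{w(b)} z_T
multiplied by z_S. -/

open Complex

lemma fL_intCast (n : ℤ) : fL (n : Alpha) = I ^ n := by
  have hI4 : I ^ (4 : ℤ) = 1 := by rw [zpow_ofNat, I_pow_four]
  rw [fL, ← zpow_natCast, ZMod.val_intCast, Nat.cast_ofNat]
  conv_rhs => rw [← Int.mul_ediv_add_emod n 4, zpow_add₀ I_ne_zero, zpow_mul, hI4, one_zpow,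
    one_mul]

lemma fW_map_intCast_add (n : ℤ) (v : AWord) :
    fW (v.map ((n : Alpha) + ·)) = I ^ n * fW v := by
  have hstep (e : Alpha) : fL ((n : Alpha) + e) = I ^ n * fL e := by
    have he : (n : Alpha) + e = ((n + (e.val : ℤ) : ℤ) : Alpha) := by
      push_cast; rw [ZMod.natCast_zmod_val]
    rw [he, fL_intCast, zpow_add₀ I_ne_zero, zpow_natCast, fL]
  simp only [fW, List.map_map, Function.comp_def, hstep, List.sum_map_mul_left]

lemma wSum_cons (b : FoldLetter) (S : FWord) : wSum (b :: S) = wInt b + wSum S := by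
  simp [wSum]

lemma wInt_mir (b : FoldLetter) : wInt (mir b) = -wInt b := by
  cases b <;> rfl

lemma fbar_cons (b : FoldLetter) (S : FWord) : fbar (b :: S) = fbar S ++ [mir b] := by
  simp [fbar]

lemma wSum_fbar (S : FWord) : wSum (fbar S) = -wSum S := by
  simp [fbar, wSum, Function.comp_def, wInt_mir, List.sum_neg, List.map_map]

lemma thetaA_cons (b : FoldLetter) (S : FWord) :
    thetaA (b :: S) = 0 :: (thetaA S).map ((wInt b : Alpha) + ·) := by
  simp [thetaA, List.range_succ_eq_map, Function.comp_def, wSum]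

lemma fW_thetaA_nil : fW (thetaA []) = 1 := by
  simp [thetaA, fW, fL, wSum]

lemma fW_thetaA_cons (b : FoldLetter) (S : FWord) :
    fW (thetaA (b :: S)) = 1 + I ^ wInt b * fW (thetaA S) := by
  rw [thetaA_cons, ← fW_map_intCast_add]
  simp [fW, fL]

lemma fW_thetaA_append_cons (S : FWord) (b : FoldLetter) (X : FWord) :
    fW (thetaA (S ++ b :: X)) = fW (thetaA S) + I ^ (wSum S + wInt b) * fW (thetaA X) := by
  induction S with
  | nil => simp [fW_thetaA_cons, fW_thetaA_nil, wSum]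
  | cons a S ih =>
    rw [List.cons_append, fW_thetaA_cons, ih, fW_thetaA_cons, wSum_cons]
    simp only [zpow_add₀ I_ne_zero]
    ring

lemma fW_thetaA_fbar (S : FWord) : fW (thetaA (fbar S)) = I ^ (-wSum S) * fW (thetaA S) := by
  induction S with
  | nil => simp [fbar, wSum]
  | cons b S ih =>
    rw [fbar_cons, fW_thetaA_append_cons, ih, wSum_fbar, wInt_mir, fW_thetaA_nil,
      fW_thetaA_cons, wSum_cons]
    have hinv : I ^ (-wInt b) * I ^ wInt b = 1 := by
      rw [← zpow_add₀ I_ne_zero, neg_add_cancel, zpow_zero]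
    simp only [neg_add, zpow_add₀ I_ne_zero]
    linear_combination (-(I ^ (-wSum S) * fW (thetaA S))) * hinv

theorem endpoint_conv_general (S T : FWord) :
    fW (thetaA (conv S T)) = fW (thetaA S) * fW (thetaA T) := by
  induction T generalizing S with
  | nil => simp [conv, fW_thetaA_nil]
  | cons b T ih =>
    have hrot : I ^ wSum S * I ^ (-wSum S) = 1 := by
      rw [← zpow_add₀ I_ne_zero, add_neg_cancel, zpow_zero]
    rw [conv, fW_thetaA_append_cons, ih, fW_thetaA_fbar, fW_thetaA_cons,
      zpow_add₀ I_ne_zero]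
    linear_combination I ^ wInt b * fW (thetaA S) * fW (thetaA T) * hrot

/-- the curve of S*T ends in the product z_S · z_T. -/
theorem endpoint_conv (S T : FWord) (hS : IsFoldString S) (hT : IsFoldString T) :
    fW (thetaA (conv S T)) = fW (thetaA S) * fW (thetaA T) :=
  endpoint_conv_general S T
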